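/- If f : [t₀, ∞) → ℝ is uniformly continuous and integrable (f ∈ L¹([t₀,∞))), then f(t) → 0 as t → ∞. -/

import Mathlib

open MeasureTheory Filter

/-- Barbalat's lemma: if `f` is uniformly continuous on `[t₀, ∞)` and integrable there,
then `f(t) → 0` as `t → ∞`. -/
theorem barbalat (t₀ : ℝ) (f : ℝ → ℝ)
    (hf_uc : UniformContinuousOn f (Set.Ici t₀))
    (hf_int : IntegrableOn f (Set.Ici t₀)) :
    Tendsto f atTop (nhds 0) := by
  by_contra h
  rw [Metric.tendsto_atTop] at h
  push_neg at h
  obtain ⟨ε, hε, hεf⟩ := h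
  -- uniform continuity: δ for ε/2
  obtain ⟨δ, hδ, hδf⟩ := Metric.uniformContinuousOn_iff.mp hf_uc (ε / 2) (by linarith)
  set g : ℝ → ℝ := fun t => |f t| with hg
  have hg_int : IntegrableOn g (Set.Ici t₀) := hf_int.abs
  -- the tail integrals tend to 0
  have h_anti : Antitone (fun n : ℕ => Set.Ici (t₀ + n)) := by
    intro m n hmn
    have : (m : ℝ) ≤ n := Nat.cast_le.mpr hmn
    exact Set.Ici_subset_Ici.mpr (by linarith)
  have h_inter : (⋂ n : ℕ, Set.Ici (t₀ + (n : ℝ))) = ∅ := by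
    ext x
    simp only [Set.mem_iInter, Set.mem_Ici, Set.mem_empty_iff_false, iff_false, not_forall, not_le]
    obtain ⟨n, hn⟩ := exists_nat_gt (x - t₀)
    exact ⟨n, by linarith⟩
  have htail : Tendsto (fun n : ℕ => ∫ x in Set.Ici (t₀ + (n : ℝ)), g x) atTop (nhds 0) := by
    have := Antitone.tendsto_setIntegral (μ := volume) (s := fun n : ℕ => Set.Ici (t₀ + n))
      (f := g) (fun i => measurableSet_Ici) h_anti (by simpa using hg_int)
    rwa [h_inter, setIntegral_empty] at this
  -- pick n with small tail
  have hpos : 0 < ε / 2 * (δ / 2) := by positivity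
  obtain ⟨n, hn⟩ := (htail.eventually (eventually_lt_nhds hpos)).exists
  -- pick t ≥ max t₀ (t₀ + n) with |f t| ≥ ε
  obtain ⟨t, ht, hft⟩ := hεf (max t₀ (t₀ + n))
  have ht0 : t₀ ≤ t := le_trans (le_max_left _ _) ht
  have htn : t₀ + n ≤ t := le_trans (le_max_right _ _) ht
  rw [Real.dist_eq, sub_zero] at hft
  -- on Ioc t (t + δ/2), |f| ≥ ε/2
  have hlow : ∀ s ∈ Set.Ioc t (t + δ / 2), ε / 2 ≤ g s := by
    intro s hs
    have hs1 : t < s := hs.1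
    have hs2 : s ≤ t + δ / 2 := hs.2
    have hsI : s ∈ Set.Ici t₀ := by simp only [Set.mem_Ici]; linarith
    have hd : dist s t < δ := by
      rw [Real.dist_eq, abs_of_nonneg (by linarith)]
      linarith
    have := hδf s hsI t (by simp only [Set.mem_Ici]; linarith) hd
    rw [Real.dist_eq] at this
    have habs : |f t| - |f s| ≤ |f s - f t| := by
      have := abs_sub_abs_le_abs_sub (f t) (f s)
      rwa [abs_sub_comm] at this
    simp only [hg]
    linarith
  -- lower bound the integral over Ioc t (t + δ/2)
  have hsub : Set.Ioc t (t + δ / 2) ⊆ Set.Ici (t₀ + n) := fun s hs => by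
    simp only [Set.mem_Ici]; linarith [hs.1]
  have hsub' : Set.Ici (t₀ + (n : ℝ)) ⊆ Set.Ici t₀ := Set.Ici_subset_Ici.mpr (by linarith [Nat.cast_nonneg (α := ℝ) n])
  have hint_tail : IntegrableOn g (Set.Ici (t₀ + (n : ℝ))) := hg_int.mono_set hsub'
  have hint_Ioc : IntegrableOn g (Set.Ioc t (t + δ / 2)) := hint_tail.mono_set hsub
  have hmeas : volume (Set.Ioc t (t + δ / 2)) = ENNReal.ofReal (δ / 2) := by
    rw [Real.volume_Ioc]; ring_nf
  have hbound : ε / 2 * (δ / 2) ≤ ∫ x in Set.Ioc t (t + δ / 2), g x := by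
    have := setIntegral_ge_of_const_le (μ := volume) (c := ε / 2) measurableSet_Ioc
      (by rw [hmeas]; exact ENNReal.ofReal_ne_top) hlow hint_Ioc
    rw [measureReal_def, hmeas, ENNReal.toReal_ofReal (by linarith), smul_eq_mul] at this
    linarith
  have hmono : ∫ x in Set.Ioc t (t + δ / 2), g x ≤ ∫ x in Set.Ici (t₀ + (n : ℝ)), g x := by
    apply setIntegral_mono_set hint_tail
    · filter_upwards with x using abs_nonneg _
    · exact Filter.Eventually.of_forall hsub
  linarith
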